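/- arXiv:2106.09045 — 2 statements merged into one kernel-verified Lean document; each statement's English description precedes it below -/
import Mathlib

section
/- Any correlations p_{i|j} (i,j ∈ {0,1,+,-}) arising from a noncontextual ontological model for the explicit example—i.e., p_{i|j} = ∑_{λ∈Λ} ξ_i(λ) μ_j(λ) where μ_j are probability distributions over a finite Λ satisfying ½μ_0 + ½μ_1 = ½μ_+ + ½μ_-, and ξ_i : Λ → [0,1] satisfy ∑_i ξ_i(λ) = 1 and ξ_0(λ) + ξ_1(λ) = ξ_+(λ) + ξ_-(λ) = ½ for all λ—must satisfy the noncontextuality inequality p_{0|1} + p_{+|1} − p_{+|+} − p_{0|-} ≤ ½. -/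
open BigOperators

/-- The noncontextuality inequality for the explicit example: any correlations
realized by a noncontextual ontological model (distributions `μ_j` obeying the
preparation equivalence and response functions `ξ_i` obeying normalization and
the measurement equivalence, both sides equal to `½`) satisfy
`p_{0|1} + p_{+|1} − p_{+|+} − p_{0|-} ≤ ½`.
Indices: `0 ↦ 0`, `1 ↦ 1`, `2 ↦ +`, `3 ↦ -`. -/
theorem noncontextuality_inequality {Λ : Type} [Fintype Λ]
    (μ : Fin 4 → Λ → ℝ) (ξ : Fin 4 → Λ → ℝ)
    (hμnn : ∀ j l, 0 ≤ μ j l) (hμsum : ∀ j, ∑ l, μ j l = 1)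
    (hξnn : ∀ i l, 0 ≤ ξ i l) (hξub : ∀ i l, ξ i l ≤ 1)
    (hξsum : ∀ l, ∑ i, ξ i l = 1)
    (hprep : ∀ l, (2 : ℝ)⁻¹ * μ 0 l + (2 : ℝ)⁻¹ * μ 1 l
        = (2 : ℝ)⁻¹ * μ 2 l + (2 : ℝ)⁻¹ * μ 3 l)
    (hmeas01 : ∀ l, ξ 0 l + ξ 1 l = (2 : ℝ)⁻¹)
    (hmeas23 : ∀ l, ξ 2 l + ξ 3 l = (2 : ℝ)⁻¹) :
    (∑ l, ξ 0 l * μ 1 l) + (∑ l, ξ 2 l * μ 1 l)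
      - (∑ l, ξ 2 l * μ 2 l) - (∑ l, ξ 0 l * μ 3 l) ≤ (2 : ℝ)⁻¹ := by
  have key : ∀ l, ξ 0 l * μ 1 l + ξ 2 l * μ 1 l - ξ 2 l * μ 2 l - ξ 0 l * μ 3 l
      ≤ (2 : ℝ)⁻¹ * μ 1 l := by
    intro l
    have ha0 := hξnn 0 l
    have ha1 := hξnn 1 l
    have hc2 := hξnn 2 l
    have hc3 := hξnn 3 l
    have h01 := hmeas01 l
    have h23 := hmeas23 l
    have hp := hprep l
    have hm0 := hμnn 0 l
    have hm1 := hμnn 1 l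
    have hm2 := hμnn 2 l
    have hm3 := hμnn 3 l
    nlinarith [mul_nonneg ha0 hm1, mul_nonneg hc2 hm1,
      mul_nonneg (by linarith : (0:ℝ) ≤ (2:ℝ)⁻¹ - ξ 0 l) hm2,
      mul_nonneg (by linarith : (0:ℝ) ≤ (2:ℝ)⁻¹ - ξ 2 l) hm3,
      mul_nonneg (by linarith : (0:ℝ) ≤ (2:ℝ)⁻¹ - ξ 0 l) hm1,
      mul_nonneg (by linarith : (0:ℝ) ≤ (2:ℝ)⁻¹ - ξ 2 l) hm1,
      mul_nonneg ha0 hm0, mul_nonneg hc2 hm0,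
      mul_nonneg (by linarith : (0:ℝ) ≤ (2:ℝ)⁻¹ - ξ 0 l)
        (by linarith : (0:ℝ) ≤ (2:ℝ)⁻¹ - ξ 2 l)]
  calc (∑ l, ξ 0 l * μ 1 l) + (∑ l, ξ 2 l * μ 1 l)
      - (∑ l, ξ 2 l * μ 2 l) - (∑ l, ξ 0 l * μ 3 l)
      = ∑ l, (ξ 0 l * μ 1 l + ξ 2 l * μ 1 l - ξ 2 l * μ 2 l - ξ 0 l * μ 3 l) := by
        rw [Finset.sum_sub_distrib, Finset.sum_sub_distrib, Finset.sum_add_distrib]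
    _ ≤ ∑ l, (2 : ℝ)⁻¹ * μ 1 l := Finset.sum_le_sum fun l _ => key l
    _ = (2 : ℝ)⁻¹ := by rw [← Finset.mul_sum, hμsum 1, mul_one]
end

section
/- There is no noncontextual ontological model reproducing the quantum statistics of the explicit example: there do not exist a finite set Λ, distributions μ_j over Λ (j ∈ {0,1,+,-}) with ½μ_0 + ½μ_1 = ½μ_+ + ½μ_- pointwise, and response functions ξ_i : Λ → [0,1] with ∑_i ξ_i(λ) = 1 and ξ_0(λ) + ξ_1(λ) = ξ_+(λ) + ξ_-(λ) for all λ, such that ∑_λ ξ_i(λ)μ_j(λ) = tr(E_i ρ_j) for all i, j, where ρ_j and E_i are as in the explicit qubit example (E_i := ½|i'⟩⟨i'| with primed states rotated by −135° in the Bloch X–Z plane). -/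
open Matrix BigOperators

noncomputable def sigmaX : Matrix (Fin 2) (Fin 2) ℂ := !![0, 1; 1, 0]
noncomputable def sigmaZ : Matrix (Fin 2) (Fin 2) ℂ := !![1, 0; 0, -1]

noncomputable def blochProj (θ : ℝ) : Matrix (Fin 2) (Fin 2) ℂ :=
  ((2 : ℝ)⁻¹) • ((1 : Matrix (Fin 2) (Fin 2) ℂ)
    + Real.sin θ • sigmaX + Real.cos θ • sigmaZ)

/-- Bloch angles of the states `ρ_0, ρ_1, ρ_+, ρ_-` (indexed `0,1,+,-`). -/
noncomputable def blochAngle : Fin 4 → ℝ :=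
  ![0, Real.pi, Real.pi / 2, 3 * Real.pi / 2]

noncomputable def state (j : Fin 4) : Matrix (Fin 2) (Fin 2) ℂ :=
  blochProj (blochAngle j)

/-- `E_i := ½|i'⟩⟨i'|` with primed states rotated by `−135°` in the Bloch
X–Z plane. -/
noncomputable def effect (i : Fin 4) : Matrix (Fin 2) (Fin 2) ℂ :=
  ((2 : ℝ)⁻¹) • blochProj (blochAngle i - 3 * Real.pi / 4)

lemma trace_bloch (α β : ℝ) :
    (Matrix.trace (blochProj α * blochProj β)).re = (1 + Real.cos (α - β))/2 := by
  simp [Matrix.trace, Matrix.mul_apply, blochProj, sigmaX, sigmaZ, Fin.sum_univ_two,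
    Matrix.smul_apply, Matrix.one_apply, Matrix.add_apply, Complex.add_re, Complex.mul_re, Complex.cos_ofReal_re, Complex.sin_ofReal_re]
  rw [Real.cos_sub]
  nlinarith [Real.sin_sq_add_cos_sq α, Real.sin_sq_add_cos_sq β]

lemma trace_eff (i j : Fin 4) : (Matrix.trace (effect i * state j)).re
    = (1 + Real.cos (blochAngle i - 3*Real.pi/4 - blochAngle j))/4 := by
  rw [effect, state, Matrix.smul_mul, Matrix.trace_smul]
  rw [Complex.real_smul, Complex.mul_re]
  simp [trace_bloch]
  ring

noncomputable def sgn : Matrix (Fin 4) (Fin 4) ℝ :=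
  !![-1,1,-1,1; 1,-1,1,-1; 1,-1,-1,1; -1,1,1,-1]

lemma c1 : Real.cos (Real.pi * (1/4)) = Real.sqrt 2/2 := by
  rw [show Real.pi * (1/4) = Real.pi/4 by ring, Real.cos_pi_div_four]
lemma cm1 : Real.cos (Real.pi * (-1/4)) = Real.sqrt 2/2 := by
  rw [show Real.pi * (-1/4) = -(Real.pi/4) by ring, Real.cos_neg, Real.cos_pi_div_four]
lemma c3 : Real.cos (Real.pi * (3/4)) = -(Real.sqrt 2/2) := by
  rw [show Real.pi * (3/4) = Real.pi - Real.pi/4 by ring, Real.cos_pi_sub, Real.cos_pi_div_four]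
lemma cm3 : Real.cos (Real.pi * (-3/4)) = -(Real.sqrt 2/2) := by
  rw [show Real.pi * (-3/4) = -(Real.pi * (3/4)) by ring, Real.cos_neg, c3]
lemma cm5 : Real.cos (Real.pi * (-5/4)) = -(Real.sqrt 2/2) := by
  rw [show Real.pi * (-5/4) = Real.pi * (3/4) - 2*Real.pi by ring, Real.cos_sub_two_pi, c3]
lemma cm7 : Real.cos (Real.pi * (-7/4)) = Real.sqrt 2/2 := by
  rw [show Real.pi * (-7/4) = Real.pi * (1/4) - 2*Real.pi by ring, Real.cos_sub_two_pi, c1]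
lemma cm9 : Real.cos (Real.pi * (-9/4)) = Real.sqrt 2/2 := by
  rw [show Real.pi * (-9/4) = Real.pi * (-1/4) - 2*Real.pi by ring, Real.cos_sub_two_pi, cm1]

lemma trace_val (i j : Fin 4) : (Matrix.trace (effect i * state j)).re
    = (1 + sgn i j * (Real.sqrt 2/2))/4 := by
  rw [trace_eff]
  fin_cases i <;> fin_cases j <;>
    norm_num [blochAngle, sgn, Matrix.cons_val_zero, Matrix.cons_val_one, Matrix.head_cons,
      Matrix.cons_val_two, Matrix.cons_val_three, Matrix.tail_cons] <;>
    ring_nf <;>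
    simp only [c1, cm1, c3, cm3, cm5, cm7, cm9] <;> ring

/-- No noncontextual ontological model reproduces the quantum statistics of
the explicit example. -/
theorem no_noncontextual_model_for_explicit_example :
    ¬ ∃ (n : ℕ) (μ : Fin 4 → Fin n → ℝ) (ξ : Fin 4 → Fin n → ℝ),
      (∀ j l, 0 ≤ μ j l) ∧ (∀ j, ∑ l, μ j l = 1) ∧
      (∀ i l, 0 ≤ ξ i l) ∧ (∀ i l, ξ i l ≤ 1) ∧
      (∀ l, ∑ i, ξ i l = 1) ∧
      (∀ l, (2 : ℝ)⁻¹ * μ 0 l + (2 : ℝ)⁻¹ * μ 1 l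
          = (2 : ℝ)⁻¹ * μ 2 l + (2 : ℝ)⁻¹ * μ 3 l) ∧
      (∀ l, ξ 0 l + ξ 1 l = ξ 2 l + ξ 3 l) ∧
      (∀ i j, ∑ l, ξ i l * μ j l = (Matrix.trace (effect i * state j)).re) := by
  rintro ⟨n, μ, ξ, hμpos, hμsum, hξpos, hξle, hξsum, hmix, hctx, hrep⟩
  have hv : ∀ i j : Fin 4, ∑ l, ξ i l * μ j l = (1 + sgn i j * (Real.sqrt 2/2))/4 :=
    fun i j => by rw [hrep i j, trace_val]
  have hhalf : ∀ l, ξ 0 l + ξ 1 l = 1/2 := by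
    intro l
    have h1 := hξsum l; rw [Fin.sum_univ_four] at h1
    have h2 := hctx l; linarith
  have hhalf2 : ∀ l, ξ 2 l + ξ 3 l = 1/2 := by
    intro l; have := hctx l; linarith [hhalf l]
  set A : Fin n → ℝ := fun l =>
    (-(ξ 0 l) + ξ 1 l + ξ 2 l - ξ 3 l) * (μ 0 l - μ 1 l)
    + (-(ξ 0 l) + ξ 1 l - ξ 2 l + ξ 3 l) * (μ 2 l - μ 3 l) with hAdef
  -- quantum value of A-sum
  have hA : ∑ l, A l
      = (∑ l, (ξ 1 l * μ 0 l + ξ 2 l * μ 0 l + ξ 0 l * μ 1 l + ξ 3 l * μ 1 l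
          + ξ 1 l * μ 2 l + ξ 3 l * μ 2 l + ξ 0 l * μ 3 l + ξ 2 l * μ 3 l))
      - (∑ l, (ξ 0 l * μ 0 l + ξ 3 l * μ 0 l + ξ 1 l * μ 1 l + ξ 2 l * μ 1 l
          + ξ 0 l * μ 2 l + ξ 2 l * μ 2 l + ξ 1 l * μ 3 l + ξ 3 l * μ 3 l)) := by
    rw [← Finset.sum_sub_distrib]
    exact Finset.sum_congr rfl fun l _ => by simp only [hAdef]; ring
  have hQ : ∑ l, A l = 2 * Real.sqrt 2 := by
    rw [hA]
    simp only [Finset.sum_add_distrib]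
    rw [hv 0 0, hv 0 1, hv 0 2, hv 0 3, hv 1 0, hv 1 1, hv 1 2, hv 1 3,
        hv 2 0, hv 2 1, hv 2 2, hv 2 3, hv 3 0, hv 3 1, hv 3 2, hv 3 3]
    norm_num [sgn, Matrix.cons_val_zero, Matrix.cons_val_one, Matrix.head_cons,
      Matrix.cons_val_two, Matrix.cons_val_three, Matrix.tail_cons]
    ring
  -- classical bound
  have hle : ∀ l, A l ≤ μ 0 l + μ 1 l := by
    intro l
    have hm : μ 2 l + μ 3 l = μ 0 l + μ 1 l := by linarith [hmix l]
    have h1 := hhalf l; have h2 := hhalf2 l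
    simp only [hAdef]
    have hx1 : ξ 1 l = 1/2 - ξ 0 l := by linarith
    have hx3 : ξ 3 l = 1/2 - ξ 2 l := by linarith
    have hm3 : μ 3 l = μ 0 l + μ 1 l - μ 2 l := by linarith
    have key : μ 0 l + μ 1 l
        - ((-(ξ 0 l) + ξ 1 l + ξ 2 l - ξ 3 l) * (μ 0 l - μ 1 l)
          + (-(ξ 0 l) + ξ 1 l - ξ 2 l + ξ 3 l) * (μ 2 l - μ 3 l))
        = 8 * (ξ 1 l * ξ 3 l * μ 3 l + ξ 1 l * ξ 2 l * μ 1 l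
          + ξ 0 l * ξ 3 l * μ 0 l + ξ 0 l * ξ 2 l * μ 2 l) := by
      rw [hx1, hx3, hm3]; ring
    nlinarith [key, mul_nonneg (mul_nonneg (hξpos 1 l) (hξpos 3 l)) (hμpos 3 l),
      mul_nonneg (mul_nonneg (hξpos 1 l) (hξpos 2 l)) (hμpos 1 l),
      mul_nonneg (mul_nonneg (hξpos 0 l) (hξpos 3 l)) (hμpos 0 l),
      mul_nonneg (mul_nonneg (hξpos 0 l) (hξpos 2 l)) (hμpos 2 l)]
  have hB : ∑ l, A l ≤ 2 := by
    calc ∑ l, A l ≤ ∑ l, (μ 0 l + μ 1 l) := Finset.sum_le_sum fun l _ => hle l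
      _ = 2 := by rw [Finset.sum_add_distrib, hμsum 0, hμsum 1]; norm_num
  have hs : (Real.sqrt 2)^2 = 2 := Real.sq_sqrt (by norm_num)
  nlinarith [Real.sqrt_nonneg 2]
end
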